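/- Let f: ℝ → ℝ be smooth with f(θ+2π) = -f(θ) for all θ, and suppose in addition that f(θ + 2π/3) = -f(θ) for all θ (equivariance under the lifted order-3 rotation). Then ∫₀^{2π} f'(θ)² dθ ≥ (9/4) ∫₀^{2π} f(θ)² dθ. -/

import Mathlib

open MeasureTheory Real Complex Set

lemma liftIco_eq_of_periodic {T : ℝ} [hT : Fact (0 < T)] {F : ℝ → ℂ}
    (hper : Function.Periodic F T)
    (x : ℝ) : AddCircle.liftIco T 0 F ↑x = F x := by
  have hmem : toIcoMod hT.out 0 x ∈ Set.Ico 0 (0 + T) := by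
    simpa using toIcoMod_mem_Ico' hT.out x
  have h1 : AddCircle.liftIco T 0 F ↑(toIcoMod hT.out 0 x) = F (toIcoMod hT.out 0 x) :=
    AddCircle.liftIco_coe_apply hmem
  have h2 : (↑(toIcoMod hT.out 0 x) : AddCircle T) = ↑x := by
    rw [toIcoMod]
    refine (QuotientAddGroup.eq_iff_sub_mem).mpr ?_
    simpa using AddSubgroup.mem_zmultiples_iff.mpr ⟨-(toIcoDiv hT.out 0 x), by ring⟩
  rw [h2] at h1
  rw [h1, toIcoMod, hper.sub_zsmul_eq]

lemma fourierCoeff_even_eq_zero {T : ℝ} [hT : Fact (0 < T)] {F : ℝ → ℂ}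
    (hper : Function.Periodic F T) (hcont : Continuous F)
    (hhalf : ∀ x, F (x + T / 2) = -F x) (m : ℤ) :
    fourierCoeff (AddCircle.liftIco T 0 F) (2 * m) = 0 := by
  have hT0 : (0:ℝ) < T := hT.out
  set Φ : ℝ → ℂ := fun x => fourier (-(2*m)) (↑x : AddCircle T) * F x with hΦdef
  have hΦcont : Continuous Φ :=
    ((map_continuous (fourier (-(2*m)))).comp (AddCircle.continuous_mk' T)).mul hcont
  have hfour : ∀ x : ℝ, fourier (-(2*m)) (↑(x + T/2) : AddCircle T)
      = fourier (-(2*m)) (↑x : AddCircle T) := by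
    intro x
    rw [fourier_coe_apply, fourier_coe_apply,
      show 2 * π * Complex.I * ((-(2*m):ℤ):ℂ) * (↑(x + T/2)) / T
          = 2 * π * Complex.I * ((-(2*m):ℤ):ℂ) * x / T + ((-m : ℤ):ℂ) * (2*π*Complex.I) from by
        have hTc : (T:ℂ) ≠ 0 := Complex.ofReal_ne_zero.mpr hT0.ne'
        push_cast
        field_simp
        ring,
      Complex.exp_add, Complex.exp_int_mul_two_pi_mul_I, mul_one]
  have hΦhalf : ∀ x : ℝ, Φ (x + T/2) = -Φ x := by
    intro x
    simp only [hΦdef, hfour x, hhalf x, mul_neg]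
  have hi : ∀ a b : ℝ, IntervalIntegrable Φ volume a b := fun a b =>
    hΦcont.intervalIntegrable a b
  have key : (∫ x in (0:ℝ)..T, Φ x) = 0 := by
    have hsplit := intervalIntegral.integral_add_adjacent_intervals (hi 0 (T/2)) (hi (T/2) T)
    have h2 : (∫ x in (T/2)..T, Φ x) = ∫ x in (0:ℝ)..(T/2), Φ (x + T/2) := by
      rw [intervalIntegral.integral_comp_add_right]
      norm_num
    have h3 : (∫ x in (0:ℝ)..(T/2), Φ (x + T/2)) = - ∫ x in (0:ℝ)..(T/2), Φ x := by
      rw [← intervalIntegral.integral_neg]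
      exact intervalIntegral.integral_congr fun x _ => hΦhalf x
    rw [h2, h3] at hsplit
    simpa using hsplit.symm
  rw [fourierCoeff_eq_intervalIntegral _ _ 0, zero_add]
  have : (∫ x in (0:ℝ)..T, fourier (-(2*m)) (↑x : AddCircle T) • AddCircle.liftIco T 0 F ↑x)
      = ∫ x in (0:ℝ)..T, Φ x := by
    refine intervalIntegral.integral_congr fun x _ => ?_
    rw [liftIco_eq_of_periodic hper, smul_eq_mul]
  rw [this, key, smul_zero]

lemma fourierCoeff_deriv_rel {T : ℝ} [hT : Fact (0 < T)] {F F' : ℝ → ℂ}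
    (hper : Function.Periodic F T)
    (hderiv : ∀ x, HasDerivAt F (F' x) x) (hcont' : Continuous F') {n : ℤ} (hn : n ≠ 0) :
    fourierCoeff (AddCircle.liftIco T 0 F') n
      = (2 * π * Complex.I * n / T) * fourierCoeff (AddCircle.liftIco T 0 F) n := by
  have hT0 : (0:ℝ) < T := hT.out
  have h2 := fourierCoeffOn_of_hasDerivAt (lt_add_of_pos_right 0 hT.out) hn
      (fun x _ => hderiv x) (hcont'.intervalIntegrable _ _)
  rw [hper 0, sub_self, mul_zero, zero_sub] at h2
  rw [fourierCoeff_liftIco_eq F n, fourierCoeff_liftIco_eq F' n]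
  have hTc : (T:ℂ) ≠ 0 := Complex.ofReal_ne_zero.mpr hT0.ne'
  have hπ : (π:ℂ) ≠ 0 := Complex.ofReal_ne_zero.mpr Real.pi_ne_zero
  have hnc : (n:ℂ) ≠ 0 := Int.cast_ne_zero.mpr hn
  have hI := Complex.I_ne_zero
  push_cast at h2 ⊢
  field_simp at h2 ⊢
  linear_combination -h2

lemma parseval_step {T : ℝ} [hT : Fact (0 < T)] {F : ℝ → ℂ}
    (hper : Function.Periodic F T) (hcont : Continuous F) :
    (∑' n : ℤ, ‖fourierCoeff (AddCircle.liftIco T 0 F) n‖^2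
      = (1/T) * ∫ x in (0:ℝ)..T, ‖F x‖^2)
    ∧ Summable (fun n : ℤ => ‖fourierCoeff (AddCircle.liftIco T 0 F) n‖^2) := by
  have hT0 : (0:ℝ) < T := hT.out
  have hGcont : Continuous (AddCircle.liftIco T 0 F) :=
    AddCircle.liftIco_continuous ((hper 0).symm ▸ rfl : F 0 = F (0 + T)) hcont.continuousOn
  set Gc : C(AddCircle T, ℂ) := ⟨AddCircle.liftIco T 0 F, hGcont⟩ with hGc
  set flp := ContinuousMap.toLp (E := ℂ) 2 AddCircle.haarAddCircle ℂ Gc with hflp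
  have hcoeff : ∀ n : ℤ, fourierCoeff (⇑flp) n = fourierCoeff (AddCircle.liftIco T 0 F) n := by
    intro n
    have := fourierCoeff_toLp Gc n
    simpa [hflp, hGc] using this
  have hpars := tsum_sq_fourierCoeff flp
  have hR : (∫ t, ‖flp t‖^2 ∂AddCircle.haarAddCircle)
      = ∫ t, ‖AddCircle.liftIco T 0 F t‖^2 ∂AddCircle.haarAddCircle := by
    refine integral_congr_ae ?_
    filter_upwards [ContinuousMap.coeFn_toLp (𝕜 := ℂ) (p := 2) AddCircle.haarAddCircle Gc]
      with t ht
    rw [hflp, ht, hGc]; rfl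
  have hIv : (∫ x in (0:ℝ)..(0 + T), ‖AddCircle.liftIco T 0 F ↑x‖^2)
      = ∫ t, ‖AddCircle.liftIco T 0 F t‖^2 ∂(volume : Measure (AddCircle T)) :=
    AddCircle.intervalIntegral_preimage T 0 (fun t => ‖AddCircle.liftIco T 0 F t‖^2)
  have hvol : (∫ t, ‖AddCircle.liftIco T 0 F t‖^2 ∂(volume : Measure (AddCircle T)))
      = T * ∫ t, ‖AddCircle.liftIco T 0 F t‖^2 ∂AddCircle.haarAddCircle := by
    rw [AddCircle.volume_eq_smul_haarAddCircle, integral_smul_measure,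
      ENNReal.toReal_ofReal hT0.le, smul_eq_mul]
  have hFx : (∫ x in (0:ℝ)..(0 + T), ‖AddCircle.liftIco T 0 F ↑x‖^2)
      = ∫ x in (0:ℝ)..T, ‖F x‖^2 := by
    rw [zero_add]
    exact intervalIntegral.integral_congr fun x _ => by rw [liftIco_eq_of_periodic hper]
  constructor
  · calc ∑' n : ℤ, ‖fourierCoeff (AddCircle.liftIco T 0 F) n‖^2
        = ∑' n : ℤ, ‖fourierCoeff (⇑flp) n‖^2 := by simp_rw [hcoeff]
      _ = ∫ t, ‖flp t‖^2 ∂AddCircle.haarAddCircle := hpars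
      _ = (1/T) * ∫ x in (0:ℝ)..T, ‖F x‖^2 := by
          rw [hR, ← hFx, hIv, hvol]; field_simp
  · have hmem := lp.memℓp (fourierBasis.repr flp)
    have hsum := hmem.summable (by norm_num : 0 < (2:ENNReal).toReal)
    refine hsum.congr fun n => ?_
    rw [fourierBasis_repr, hcoeff n]
    norm_num




/-- For smooth antiperiodic functions on ℝ that in addition change sign under the
rotation by `2π/3`, the lowest eigenvalue of `-d²/dθ²` is `9/4`. -/
theorem mobius_equivariant_lowest_eigenvalue_nine_quarters
    (f : ℝ → ℝ) (hf : ContDiff ℝ (⊤ : ℕ∞) f)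
    (hanti : ∀ θ : ℝ, f (θ + 2 * Real.pi) = - f θ)
    (hequiv : ∀ θ : ℝ, f (θ + 2 * Real.pi / 3) = - f θ) :
    (9 / 4) * ∫ θ in (0:ℝ)..(2 * Real.pi), (f θ) ^ 2
      ≤ ∫ θ in (0:ℝ)..(2 * Real.pi), (deriv f θ) ^ 2 := by

  have hπ : (0:ℝ) < π := Real.pi_pos
  set L : ℝ := 2 * π / 3 with hLdef
  set T : ℝ := 4 * π / 3 with hTdef
  have hT0 : (0:ℝ) < T := by rw [hTdef]; linarith
  haveI : Fact ((0:ℝ) < T) := ⟨hT0⟩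
  have hT2 : T / 2 = L := by rw [hTdef, hLdef]; ring
  have hdiff : Differentiable ℝ f := hf.differentiable (by simp)
  have hcf : Continuous f := hf.continuous
  have hcf' : Continuous (deriv f) := hf.continuous_deriv (by simp)
  -- antiperiodicity of f and deriv f with antiperiod L
  have hfL : ∀ x : ℝ, f (x + L) = - f x := hequiv
  have hDL : ∀ x : ℝ, deriv f (x + L) = - deriv f x := by
    intro x
    have h1 : (fun y => f (y + L)) = fun y => -f y := funext hfL
    have h2 := congrArg (fun g => deriv g x) h1
    simpa [deriv_comp_add_const] using h2
  have hfper : Function.Periodic f T := by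
    intro x
    have hx : x + T = (x + L) + L := by rw [hTdef, hLdef]; ring
    rw [hx, hfL, hfL, neg_neg]
  have hDper : Function.Periodic (deriv f) T := by
    intro x
    have hx : x + T = (x + L) + L := by rw [hTdef, hLdef]; ring
    rw [hx, hDL, hDL, neg_neg]
  -- complexified functions
  set F : ℝ → ℂ := fun x => (f x : ℂ) with hF
  set F' : ℝ → ℂ := fun x => ((deriv f x : ℝ) : ℂ) with hF'
  have hFper : Function.Periodic F T := fun x => by simp [hF, hfper x]
  have hF'per : Function.Periodic F' T := fun x => by simp [hF', hDper x]
  have hFc : Continuous F := Complex.continuous_ofReal.comp hcf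
  have hF'c : Continuous F' := Complex.continuous_ofReal.comp hcf'
  have hFhalf : ∀ x : ℝ, F (x + T / 2) = - F x := fun x => by
    rw [hT2]; simp [hF, hfL x]
  have hF'half : ∀ x : ℝ, F' (x + T / 2) = - F' x := fun x => by
    rw [hT2]; simp [hF', hDL x]
  have hdF : ∀ x : ℝ, HasDerivAt F (F' x) x := fun x =>
    ((hdiff x).hasDerivAt).ofReal_comp
  -- Fourier coefficients
  set c : ℤ → ℂ := fun n => fourierCoeff (AddCircle.liftIco T 0 F) n with hc
  set c' : ℤ → ℂ := fun n => fourierCoeff (AddCircle.liftIco T 0 F') n with hc'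
  have heven : ∀ m : ℤ, c (2 * m) = 0 := fun m =>
    fourierCoeff_even_eq_zero hFper hFc hFhalf m
  have heven' : ∀ m : ℤ, c' (2 * m) = 0 := fun m =>
    fourierCoeff_even_eq_zero hF'per hF'c hF'half m
  have hrel : ∀ n : ℤ, n ≠ 0 → c' n = (2 * π * Complex.I * n / T) * c n := fun n hn =>
    fourierCoeff_deriv_rel hFper hdF hF'c hn
  obtain ⟨hPF, hSF⟩ := parseval_step hFper hFc
  obtain ⟨hPF', hSF'⟩ := parseval_step hF'per hF'c
  -- termwise comparison
  have hterm : ∀ n : ℤ, (9/4) * ‖c n‖^2 ≤ ‖c' n‖^2 := by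
    intro n
    rcases Int.even_or_odd n with he | ho
    · obtain ⟨r, hr⟩ := he
      have hn2 : n = 2 * r := by rw [hr]; ring
      rw [hn2, heven r, heven' r]
      simp
    · have hn : n ≠ 0 := by
        rintro rfl
        simp at ho
      have habs : (1:ℝ) ≤ |(n:ℝ)| := by
        rw [← Int.cast_abs]
        exact_mod_cast Int.one_le_abs hn
      have hnorm : ‖c' n‖^2 = (3/2 * |(n:ℝ)|)^2 * ‖c n‖^2 := by
        rw [hrel n hn, norm_mul, mul_pow]
        congr 2
        rw [norm_div, norm_mul, norm_mul, norm_mul]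
        simp only [Complex.norm_I, Complex.norm_real, Complex.norm_intCast,
          Complex.norm_ofNat]
        rw [Real.norm_eq_abs, Real.norm_eq_abs, abs_of_pos hπ, abs_of_pos hT0]
        rw [hTdef]
        field_simp
        ring
      rw [hnorm]
      nlinarith [sq_nonneg (‖c n‖), norm_nonneg (c n), sq_nonneg (|(n:ℝ)| - 1)]
  have hsum : (9/4) * ∑' n : ℤ, ‖c n‖^2 ≤ ∑' n : ℤ, ‖c' n‖^2 := by
    rw [← tsum_mul_left]
    exact Summable.tsum_le_tsum hterm (hSF.mul_left _) hSF'
  rw [hPF, hPF'] at hsum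
  -- convert complex norms to real squares
  have hint1 : (∫ x in (0:ℝ)..T, ‖F x‖^2) = ∫ x in (0:ℝ)..T, (f x)^2 :=
    intervalIntegral.integral_congr fun x _ => by
      simp [hF, Real.norm_eq_abs, _root_.sq_abs]
  have hint2 : (∫ x in (0:ℝ)..T, ‖F' x‖^2) = ∫ x in (0:ℝ)..T, (deriv f x)^2 :=
    intervalIntegral.integral_congr fun x _ => by
      simp [hF', Real.norm_eq_abs, _root_.sq_abs]
  rw [hint1, hint2] at hsum
  -- periodic rescaling of the integrals
  have hperL1 : Function.Periodic (fun x => (f x)^2) L := fun x => by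
    simp [hfL x]
  have hperL2 : Function.Periodic (fun x => (deriv f x)^2) L := fun x => by
    simp [hDL x]
  have hint1' : ∀ t₁ t₂ : ℝ, IntervalIntegrable (fun x => (f x)^2) volume t₁ t₂ :=
    fun t₁ t₂ => (hcf.pow 2).intervalIntegrable t₁ t₂
  have hint2' : ∀ t₁ t₂ : ℝ, IntervalIntegrable (fun x => (deriv f x)^2) volume t₁ t₂ :=
    fun t₁ t₂ => (hcf'.pow 2).intervalIntegrable t₁ t₂
  have hscale : ∀ (u : ℝ → ℝ), Function.Periodic u L →
      (∀ t₁ t₂ : ℝ, IntervalIntegrable u volume t₁ t₂) →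
      (∫ x in (0:ℝ)..(2*π), u x) = 3 * ∫ x in (0:ℝ)..L, u x
        ∧ (∫ x in (0:ℝ)..T, u x) = 2 * ∫ x in (0:ℝ)..L, u x := by
    intro u hu hui
    constructor
    · have h3 := hu.intervalIntegral_add_zsmul_eq 3 0 hui
      simp only [zsmul_eq_mul] at h3
      rw [show (0:ℝ) + (3:ℤ) * L = 2*π by push_cast [hLdef]; ring,
        show (0:ℝ) + L = L by ring] at h3
      rw [h3]; push_cast; ring
    · have h2 := hu.intervalIntegral_add_zsmul_eq 2 0 hui
      simp only [zsmul_eq_mul] at h2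
      rw [show (0:ℝ) + (2:ℤ) * L = T by push_cast [hLdef, hTdef]; ring,
        show (0:ℝ) + L = L by ring] at h2
      rw [h2]; push_cast; ring
  obtain ⟨ha1, ha2⟩ := hscale _ hperL1 hint1'
  obtain ⟨hb1, hb2⟩ := hscale _ hperL2 hint2'
  rw [ha2, hb2] at hsum
  rw [ha1, hb1]
  have hT0' : (0:ℝ) < 1/T := by positivity
  nlinarith [hsum, hT0]
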